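/- Let I be a monomial ideal in S = K[x,y]. Then every Stanley decomposition of S/I corresponds to a prime filtration of S/I; that is, for any Stanley decomposition S/I = ⊕_{i=1}^r u_iK[Z_i], the Stanley spaces T_i = u_iK[Z_i] can be ordered so that every partial sum I ⊕ T_1 ⊕ ⋯ ⊕ T_k is a monomial ideal, and the resulting chain is a prime filtration of S/I. -/

import Mathlib

open MvPolynomial

/-- The monomial `x^a` in `K[x_i : i ∈ σ]`. -/
noncomputable def mono (K : Type*) [Field K] {σ : Type*} (a : σ →₀ ℕ) :
    MvPolynomial σ K :=
  MvPolynomial.monomial a 1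

/-- An ideal is a monomial ideal if it is generated by monomials. -/
def IsMonomialIdeal {K : Type*} [Field K] {σ : Type*}
    (I : Ideal (MvPolynomial σ K)) : Prop :=
  ∃ A : Set (σ →₀ ℕ), I = Ideal.span ((fun a => mono K a) '' A)

/-- `IsPrimeFiltration I c u` says that `c` is a chain of (monomial) ideals
`I = I₀ ⊆ I₁ ⊆ ⋯ ⊆ I_r = S` with `I_j = I_{j-1} + (x^{u j})` and
`I_{j-1} : x^{u j}` a prime ideal, i.e. `I_j/I_{j-1} ≅ S/P_j`. -/
def IsPrimeFiltration {K : Type*} [Field K] {σ : Type*}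
    (I : Ideal (MvPolynomial σ K)) {r : ℕ}
    (c : Fin (r + 1) → Ideal (MvPolynomial σ K)) (u : Fin r → (σ →₀ ℕ)) : Prop :=
  c 0 = I ∧ c (Fin.last r) = ⊤ ∧
    (∀ j : Fin r, c j.succ = c j.castSucc ⊔ Ideal.span {mono K (u j)}) ∧
    (∀ j : Fin r, ((c j.castSucc).colon (Ideal.span {mono K (u j)})).IsPrime)

/-- The `j`-th prime factor `P_j = I_{j-1} : u_j` of a prime filtration. -/
noncomputable def filtFactor {K : Type*} [Field K] {σ : Type*} {r : ℕ}
    (c : Fin (r + 1) → Ideal (MvPolynomial σ K)) (u : Fin r → (σ →₀ ℕ)) (j : Fin r) :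
    Ideal (MvPolynomial σ K) :=
  (c j.castSucc).colon (Ideal.span {mono K (u j)})

/-- A prime filtration is pretty clean if `i < j` and `P_i ⊆ P_j` imply `P_i = P_j`. -/
def IsPrettyCleanFiltration {K : Type*} [Field K] {σ : Type*}
    (I : Ideal (MvPolynomial σ K)) {r : ℕ}
    (c : Fin (r + 1) → Ideal (MvPolynomial σ K)) (u : Fin r → (σ →₀ ℕ)) : Prop :=
  IsPrimeFiltration I c u ∧
    ∀ i j : Fin r, i < j → filtFactor c u i ≤ filtFactor c u j →
      filtFactor c u i = filtFactor c u j

/-- A monomial ideal is pretty clean if it admits a pretty clean filtration. -/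
def IsPrettyClean {K : Type*} [Field K] {σ : Type*}
    (I : Ideal (MvPolynomial σ K)) : Prop :=
  ∃ (r : ℕ) (c : Fin (r + 1) → Ideal (MvPolynomial σ K)) (u : Fin r → (σ →₀ ℕ)),
    IsPrettyCleanFiltration I c u

/-- A prime filtration is clean if its support is the set of minimal primes of `I`. -/
def IsCleanFiltration {K : Type*} [Field K] {σ : Type*}
    (I : Ideal (MvPolynomial σ K)) {r : ℕ}
    (c : Fin (r + 1) → Ideal (MvPolynomial σ K)) (u : Fin r → (σ →₀ ℕ)) : Prop :=
  IsPrimeFiltration I c u ∧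
    {P | ∃ j : Fin r, filtFactor c u j = P} = I.minimalPrimes

/-- A monomial ideal is clean if it admits a clean filtration. -/
def IsClean {K : Type*} [Field K] {σ : Type*}
    (I : Ideal (MvPolynomial σ K)) : Prop :=
  ∃ (r : ℕ) (c : Fin (r + 1) → Ideal (MvPolynomial σ K)) (u : Fin r → (σ →₀ ℕ)),
    IsCleanFiltration I c u


/-- The family of residue classes of the monomials `x^{u i}·x^v`, `supp v ⊆ Z i`,
of a candidate Stanley decomposition `S/I = ⊕ᵢ x^{u i} K[Z i]`. -/
noncomputable def stanleyFamily {K : Type*} [Field K] {n : ℕ}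
    (I : Ideal (MvPolynomial (Fin n) K)) {r : ℕ}
    (u : Fin r → (Fin n →₀ ℕ)) (Z : Fin r → Finset (Fin n)) :
    (Σ i : Fin r, {v : Fin n →₀ ℕ // v.support ⊆ Z i}) →
      (MvPolynomial (Fin n) K ⧸ I) :=
  fun p => Ideal.Quotient.mk I (mono K (u p.1 + p.2.1))

/-- `S/I = ⊕ᵢ x^{u i} K[Z i]` is a Stanley decomposition: the residue classes of
the monomials `x^{u i}·x^v` (`supp v ⊆ Z i`) form a `K`-basis of `S/I`. -/
def IsStanleyDecomposition {K : Type*} [Field K] {n : ℕ}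
    (I : Ideal (MvPolynomial (Fin n) K)) {r : ℕ}
    (u : Fin r → (Fin n →₀ ℕ)) (Z : Fin r → Finset (Fin n)) : Prop :=
  LinearIndependent K (stanleyFamily I u Z) ∧
    Submodule.span K (Set.range (stanleyFamily I u Z)) = ⊤

/-- The Stanley space `x^a·K[Z]` viewed as a `K`-subspace of `S`: the `K`-span
of the monomials `x^a·x^v` with `supp v ⊆ Z`. -/
noncomputable def stanleySubspace (K : Type*) [Field K] {n : ℕ}
    (a : Fin n →₀ ℕ) (Z : Finset (Fin n)) :
    Submodule K (MvPolynomial (Fin n) K) :=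
  Submodule.span K ((fun v => mono K (a + v)) '' {v : Fin n →₀ ℕ | v.support ⊆ Z})

/-- The partial sum `I ⊕ T_{ord 0} ⊕ ⋯ ⊕ T_{ord k}` of Stanley spaces (in the
order given by `ord`) as a `K`-subspace of `S`. -/
noncomputable def stanleyPartialSum {K : Type*} [Field K] {n : ℕ}
    (I : Ideal (MvPolynomial (Fin n) K)) {r : ℕ}
    (u : Fin r → (Fin n →₀ ℕ)) (Z : Fin r → Finset (Fin n))
    (ord : Equiv.Perm (Fin r)) (k : Fin r) :
    Submodule K (MvPolynomial (Fin n) K) :=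
  Submodule.restrictScalars K I ⊔
    ⨆ i : Fin r, ⨆ _ : i ≤ k, stanleySubspace K (u (ord i)) (Z (ord i))

/-!
Let `M ⊆ ℕ²` be the exponent set of `I`, an upper set. A Stanley decomposition of `S/I` says
exactly that the cells `u i + ℕ^(Z i)` partition the complement of `M`. A cell `u + ℕ^Z` can be
glued onto `M` as one step of a prime filtration as soon as `u + e_i ∈ M` for every `i ∉ Z`: the
union is again an upper set, and `(M) : x^u` is generated by the variables outside `Z`, hence
prime. It therefore suffices that some cell can always be glued on. In the plane a quadrant
always can; otherwise either the complement of `M` has a maximal point beyond all rays, whose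
cell is that single point, or one of the outermost vertical and horizontal rays can be glued on.
-/

section Partitions

variable {α ι : Type*}

def IsComplPartition (M : Set α) (C : ι → Set α) : Prop :=
  Pairwise (fun i j => Disjoint (C i) (C j)) ∧ ⋃ i, C i = Mᶜ

namespace IsComplPartition

variable {M : Set α} {C : ι → Set α}

theorem exists_mem (hP : IsComplPartition M C) {q : α} (hq : q ∉ M) : ∃ i, q ∈ C i :=
  Set.mem_iUnion.mp (hP.2 ▸ hq)

theorem notMem (hP : IsComplPartition M C) {q : α} {i : ι} (hq : q ∈ C i) : q ∉ M := by
  rw [← Set.mem_compl_iff, ← hP.2]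
  exact Set.mem_iUnion_of_mem i hq

theorem eq_of_mem (hP : IsComplPartition M C) {q : α} {i j : ι} (hi : q ∈ C i)
    (hj : q ∈ C j) : i = j := by
  by_contra hij
  exact Set.disjoint_left.mp (hP.1 hij) hi hj

theorem comp_equiv {κ : Type*} (hP : IsComplPartition M C) (e : κ ≃ ι) :
    IsComplPartition M (C ∘ e) :=
  ⟨hP.1.comp_of_injective e.injective, (e.surjective.iUnion_comp C).trans hP.2⟩

theorem union_succAbove {n : ℕ} {C : Fin (n + 1) → Set α} (hP : IsComplPartition M C)
    (j : Fin (n + 1)) : IsComplPartition (M ∪ C j) fun i => C (j.succAbove i) := by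
  refine ⟨hP.1.comp_of_injective Fin.succAbove_right_injective, Set.ext fun q => ?_⟩
  simp only [Set.mem_iUnion, Set.mem_compl_iff, Set.mem_union, not_or]
  constructor
  · rintro ⟨i, hi⟩
    exact ⟨hP.notMem hi, fun hj => Fin.succAbove_ne j i (hP.eq_of_mem hi hj)⟩
  · rintro ⟨hM, hj⟩
    obtain ⟨i, hi⟩ := hP.exists_mem hM
    obtain ⟨i', rfl⟩ := Fin.exists_succAbove_eq (fun h : i = j => hj (h ▸ hi))
    exact ⟨i', hi⟩

end IsComplPartition

def partialUnion {r : ℕ} (M : Set α) (C : Fin r → Set α) (t : ℕ) : Set α :=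
  M ∪ ⋃ (i : Fin r) (_ : (i : ℕ) < t), C i

variable {r : ℕ} {M : Set α} {C : Fin r → Set α}

@[simp]
theorem partialUnion_zero : partialUnion M C 0 = M := by
  simp [partialUnion]

theorem partialUnion_succ {t : ℕ} (ht : t < r) :
    partialUnion M C (t + 1) = partialUnion M C t ∪ C ⟨t, ht⟩ := by
  ext q
  simp only [partialUnion, Set.mem_union, Set.mem_iUnion, exists_prop]
  constructor
  · rintro (hq | ⟨i, hi, hq⟩)
    · exact Or.inl (Or.inl hq)
    · rcases Nat.lt_succ_iff_lt_or_eq.mp hi with hi | hi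
      · exact Or.inl (Or.inr ⟨i, hi, hq⟩)
      · exact Or.inr (by rwa [show i = ⟨t, ht⟩ from Fin.ext hi] at hq)
  · rintro ((hq | ⟨i, hi, hq⟩) | hq)
    · exact Or.inl hq
    · exact Or.inr ⟨i, by omega, hq⟩
    · exact Or.inr ⟨_, Nat.lt_succ_self t, hq⟩

theorem partialUnion_val_add_one (k : Fin r) :
    partialUnion M C (k + 1) = M ∪ ⋃ (i : Fin r) (_ : i ≤ k), C i := by
  simp only [partialUnion, Nat.lt_succ_iff, Fin.val_fin_le]

theorem partialUnion_of_le {t : ℕ} (ht : r ≤ t) : partialUnion M C t = M ∪ ⋃ i, C i := by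
  simp only [partialUnion]
  congr! with i
  simp [show (i : ℕ) < t by omega]

theorem partialUnion_add_one_eq_partialUnion_union {n : ℕ} (C : Fin (n + 1) → Set α) (t : ℕ) :
    partialUnion M C (t + 1) = partialUnion (M ∪ C 0) (fun i => C i.succ) t := by
  ext q
  simp only [partialUnion, Set.mem_union, Set.mem_iUnion, exists_prop, Fin.exists_fin_succ,
    Fin.val_zero, Fin.val_succ, Nat.zero_lt_succ, true_and, Nat.succ_lt_succ_iff]
  tauto

theorem IsComplPartition.partialUnion_eq_univ (hP : IsComplPartition M C) :
    partialUnion M C r = Set.univ := by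
  rw [partialUnion_of_le le_rfl, hP.2, Set.union_compl_self]

theorem IsComplPartition.disjoint_partialUnion (hP : IsComplPartition M C) (k : Fin r) :
    Disjoint (C k) (partialUnion M C k) := by
  simp only [partialUnion, Set.disjoint_union_right, Set.disjoint_iUnion_right]
  refine ⟨Set.disjoint_left.mpr fun q hq => hP.notMem hq, fun i hi => hP.1 ?_⟩
  exact fun h => (h ▸ hi).ne rfl

end Partitions

section Cells

variable {σ : Type*}

def stanleyCell (u : σ →₀ ℕ) (Z : Finset σ) : Set (σ →₀ ℕ) :=
  (u + ·) '' {v | v.support ⊆ Z}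

theorem add_mem_stanleyCell_iff {u v : σ →₀ ℕ} {Z : Finset σ} :
    u + v ∈ stanleyCell u Z ↔ v.support ⊆ Z := by
  simp [stanleyCell]

theorem self_mem_stanleyCell (u : σ →₀ ℕ) (Z : Finset σ) : u ∈ stanleyCell u Z := by
  simpa using add_mem_stanleyCell_iff (u := u) (v := 0) (Z := Z)

theorem mem_stanleyCell {u w : σ →₀ ℕ} {Z : Finset σ} :
    w ∈ stanleyCell u Z ↔ u ≤ w ∧ ∀ i ∉ Z, w i = u i := by
  constructor
  · rintro ⟨v, hv, rfl⟩
    refine ⟨le_self_add, fun i hi => ?_⟩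
    simp [Finsupp.notMem_support_iff.mp fun h => hi (hv h)]
  · rintro ⟨hle, hZ⟩
    rw [← add_tsub_cancel_of_le hle, add_mem_stanleyCell_iff]
    intro i hi
    by_contra hiZ
    simp [hZ i hiZ] at hi

end Cells

section Attaching

variable {σ : Type*}

def IsAttachable (M : Set (σ →₀ ℕ)) (u : σ →₀ ℕ) (Z : Finset σ) : Prop :=
  ∀ i ∉ Z, u + Finsupp.single i 1 ∈ M

theorem add_single_le_add {u v : σ →₀ ℕ} {i : σ} (hi : v i ≠ 0) :
    u + Finsupp.single i 1 ≤ u + v :=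
  add_le_add_right (Finsupp.single_le_iff.mpr (Nat.one_le_iff_ne_zero.mpr hi)) u

theorem IsUpperSet.union_stanleyCell {M : Set (σ →₀ ℕ)} (hM : IsUpperSet M) {u : σ →₀ ℕ}
    {Z : Finset σ} (h : IsAttachable M u Z) : IsUpperSet (M ∪ stanleyCell u Z) := by
  rintro a b hab (ha | ha)
  · exact Or.inl (hM hab ha)
  obtain ⟨v, rfl⟩ := exists_add_of_le ((mem_stanleyCell.mp ha).1.trans hab)
  by_cases hv : v.support ⊆ Z
  · exact Or.inr (add_mem_stanleyCell_iff.mpr hv)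
  obtain ⟨i, hiv, hiZ⟩ := Finset.not_subset.mp hv
  exact Or.inl (hM (add_single_le_add (Finsupp.mem_support_iff.mp hiv)) (h i hiZ))

theorem IsAttachable.add_mem_iff {M : Set (σ →₀ ℕ)} (hM : IsUpperSet M) {u : σ →₀ ℕ}
    {Z : Finset σ} (h : IsAttachable M u Z) (hdisj : Disjoint (stanleyCell u Z) M)
    (v : σ →₀ ℕ) : u + v ∈ M ↔ ∃ i ∉ Z, v i ≠ 0 := by
  constructor
  · intro hv
    by_contra! hZ
    refine Set.disjoint_left.mp hdisj (add_mem_stanleyCell_iff.mpr fun i hi => ?_) hv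
    by_contra hiZ
    exact Finsupp.mem_support_iff.mp hi (hZ i hiZ)
  · rintro ⟨i, hiZ, hi⟩
    exact hM (add_single_le_add hi) (h i hiZ)

theorem IsComplPartition.exists_isAttachable_of_maximal {ι : Type*} {M : Set (σ →₀ ℕ)}
    {u : ι → σ →₀ ℕ} {Z : ι → Finset σ}
    (hP : IsComplPartition M fun i => stanleyCell (u i) (Z i)) {q : σ →₀ ℕ} (hq : q ∉ M)
    (hmax : ∀ i, q + Finsupp.single i 1 ∈ M) : ∃ j, IsAttachable M (u j) (Z j) := by
  classical
  obtain ⟨j, v, hv, rfl⟩ := hP.exists_mem hq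
  -- a nonzero `v` would let the cell grow past `q` into `M`
  obtain rfl : v = 0 := by
    by_contra hne
    obtain ⟨i, hi⟩ := Finsupp.support_nonempty_iff.mpr hne
    have hcell : u j + (v + Finsupp.single i 1) ∈ stanleyCell (u j) (Z j) := by
      refine add_mem_stanleyCell_iff.mpr (Finsupp.support_add.trans (Finset.union_subset hv ?_))
      simpa using hv hi
    exact hP.notMem hcell (by simpa [add_assoc] using hmax i)
  exact ⟨j, fun i _ => by simpa using hmax i⟩

theorem isUpperSet_partialUnion {M : Set (σ →₀ ℕ)} (hM : IsUpperSet M) {r : ℕ}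
    {u : Fin r → σ →₀ ℕ} {Z : Fin r → Finset σ}
    (hA : ∀ k : Fin r,
      IsAttachable (partialUnion M (fun i => stanleyCell (u i) (Z i)) k) (u k) (Z k)) :
    ∀ t ≤ r, IsUpperSet (partialUnion M (fun i => stanleyCell (u i) (Z i)) t)
  | 0, _ => by simpa using hM
  | t + 1, ht => by
    rw [partialUnion_succ ht]
    exact (isUpperSet_partialUnion hM hA t (Nat.le_of_succ_le ht)).union_stanleyCell (hA ⟨t, ht⟩)

end Attaching

section Plane

variable {ι : Type*} {M : Set (Fin 2 →₀ ℕ)} {u : ι → Fin 2 →₀ ℕ} {Z : ι → Finset (Fin 2)}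

theorem finset_fin_two_cases (Z : Finset (Fin 2)) :
    Z = ∅ ∨ Z = {0} ∨ Z = {1} ∨ Z = Finset.univ := by
  revert Z
  decide

theorem exists_bound_attained (s : Finset ι) (f : ι → ℕ) :
    ∃ W, (∀ i ∈ s, f i < W) ∧ (W = 0 ∨ ∃ i ∈ s, f i + 1 = W) := by
  refine ⟨s.sup (f · + 1), fun i hi => Finset.le_sup (f := (f · + 1)) hi, ?_⟩
  rcases s.eq_empty_or_nonempty with rfl | hs
  · exact Or.inl rfl
  · obtain ⟨i, hi, he⟩ := Finset.exists_mem_eq_sup s hs (f · + 1)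
    exact Or.inr ⟨i, hi, he.symm⟩

theorem eq_of_mem_stanleyCell_of_le {W H : ℕ} (hquad : ∀ i, Z i ≠ Finset.univ)
    (hW : ∀ i, Z i = {1} → u i 0 < W) (hH : ∀ i, Z i = {0} → u i 1 < H) {j : ι}
    {q : Fin 2 →₀ ℕ} (hq : q ∈ stanleyCell (u j) (Z j)) (hWq : W ≤ q 0) (hHq : H ≤ q 1) :
    q = u j := by
  obtain ⟨-, hfix⟩ := mem_stanleyCell.mp hq
  rcases finset_fin_two_cases (Z j) with h | h | h | h
  · exact Finsupp.ext fun k => hfix k (by simp [h])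
  · have := hfix 1 (by simp [h])
    have := hH j h
    omega
  · have := hfix 0 (by simp [h])
    have := hW j h
    omega
  · exact absurd h (hquad j)

theorem IsComplPartition.exists_isAttachable_of_corner [Finite ι] {W H : ℕ}
    (hP : IsComplPartition M fun i => stanleyCell (u i) (Z i)) (hquad : ∀ i, Z i ≠ Finset.univ)
    (hW : ∀ i, Z i = {1} → u i 0 < W) (hH : ∀ i, Z i = {0} → u i 1 < H)
    (hE : ∃ q ∉ M, W ≤ q 0 ∧ H ≤ q 1) : ∃ j, IsAttachable M (u j) (Z j) := by
  set E := {q | q ∉ M ∧ W ≤ q 0 ∧ H ≤ q 1}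
  have hEfin : E.Finite := by
    refine (Set.finite_range u).subset fun q ⟨hq, hWq, hHq⟩ => ?_
    obtain ⟨j, hj⟩ := hP.exists_mem hq
    exact ⟨j, (eq_of_mem_stanleyCell_of_le hquad hW hH hj hWq hHq).symm⟩
  obtain ⟨q, ⟨hqM, hWq, hHq⟩, hqmax⟩ := hEfin.exists_maximal (by
    obtain ⟨q, hq, hWH⟩ := hE
    exact ⟨q, hq, hWH⟩)
  refine hP.exists_isAttachable_of_maximal hqM fun k => ?_
  by_contra hk
  have hle := hqmax (y := q + Finsupp.single k 1)
    ⟨hk, le_add_right hWq, le_add_right hHq⟩ le_self_add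
  simpa using hle k

theorem isAttachable_singleton_one {u : Fin 2 →₀ ℕ} (h : u + Finsupp.single 0 1 ∈ M) :
    IsAttachable M u {1} := by
  intro k hk
  fin_cases k
  · exact h
  · simp at hk

theorem isAttachable_singleton_zero {u : Fin 2 →₀ ℕ} (h : u + Finsupp.single 1 1 ∈ M) :
    IsAttachable M u {0} := by
  intro k hk
  fin_cases k
  · simp at hk
  · exact h

theorem IsComplPartition.exists_isAttachable_of_rays [Nonempty ι] {W H : ℕ}
    (hP : IsComplPartition M fun i => stanleyCell (u i) (Z i))
    (hW : W = 0 ∨ ∃ i, Z i = {1} ∧ u i 0 + 1 = W) (hH : H = 0 ∨ ∃ i, Z i = {0} ∧ u i 1 + 1 = H)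
    (hE : ∀ q ∉ M, W ≤ q 0 → q 1 < H) : ∃ j, IsAttachable M (u j) (Z j) := by
  have vert : ∀ i, Z i = {1} → u i 0 + 1 = W → H ≤ u i 1 → IsAttachable M (u i) (Z i) := by
    intro i hi hiW hiH
    rw [hi]
    refine isAttachable_singleton_one (by_contra fun hq => ?_)
    have := hE _ hq (by simp [hiW])
    simp at this
    omega
  have horiz : ∀ i, Z i = {0} → u i 1 + 1 = H → W ≤ u i 0 → IsAttachable M (u i) (Z i) := by
    intro i hi hiH hiW
    rw [hi]
    refine isAttachable_singleton_zero (by_contra fun hq => ?_)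
    have := hE _ hq (by simpa using hiW)
    simp at this
    omega
  rcases hW with hW | ⟨i, hi, hiW⟩ <;> rcases hH with hH | ⟨j, hj, hjH⟩
  · obtain ⟨i⟩ := ‹Nonempty ι›
    have := hE _ (hP.notMem (self_mem_stanleyCell (u i) (Z i))) (by omega)
    omega
  · exact ⟨j, horiz j hj hjH (by omega)⟩
  · exact ⟨i, vert i hi hiW (by omega)⟩
  by_cases hiH : H ≤ u i 1
  · exact ⟨i, vert i hi hiW hiH⟩
  by_cases hjW : W ≤ u j 0
  · exact ⟨j, horiz j hj hjH hjW⟩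
  -- otherwise both rays would pass through the point `(W - 1, H - 1)`
  set p : Fin 2 →₀ ℕ := Finsupp.single 0 (W - 1) + Finsupp.single 1 (H - 1)
  have hpi : p ∈ stanleyCell (u i) (Z i) := by
    simp [mem_stanleyCell, hi, Finsupp.le_def, Fin.forall_fin_two, p]
    omega
  have hpj : p ∈ stanleyCell (u j) (Z j) := by
    simp [mem_stanleyCell, hj, Finsupp.le_def, Fin.forall_fin_two, p]
    omega
  obtain rfl := hP.eq_of_mem hpi hpj
  exact absurd (hi.symm.trans hj) (by decide)

theorem IsComplPartition.exists_isAttachable_fin_two [Finite ι] [Nonempty ι]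
    (hP : IsComplPartition M fun i => stanleyCell (u i) (Z i)) :
    ∃ j, IsAttachable M (u j) (Z j) := by
  classical
  have := Fintype.ofFinite ι
  by_cases hquad : ∃ j, Z j = Finset.univ
  · obtain ⟨j, hj⟩ := hquad
    exact ⟨j, fun i hi => absurd (hj ▸ Finset.mem_univ i) hi⟩
  push Not at hquad
  -- cells with `Z = {1}` are vertical rays, all left of column `W`; similarly for rows and `H`
  obtain ⟨W, hW, hW'⟩ := exists_bound_attained (Finset.univ.filter (Z · = {1})) (u · 0)
  obtain ⟨H, hH, hH'⟩ := exists_bound_attained (Finset.univ.filter (Z · = {0})) (u · 1)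
  simp only [Finset.mem_filter, Finset.mem_univ, true_and] at hW hW' hH hH'
  by_cases hE : ∃ q ∉ M, W ≤ q 0 ∧ H ≤ q 1
  · exact hP.exists_isAttachable_of_corner hquad hW hH hE
  · push Not at hE
    exact hP.exists_isAttachable_of_rays hW' hH' hE

end Plane

theorem exists_attaching_order {M : Set (Fin 2 →₀ ℕ)} (hM : IsUpperSet M) {r : ℕ}
    {u : Fin r → Fin 2 →₀ ℕ} {Z : Fin r → Finset (Fin 2)}
    (hP : IsComplPartition M fun i => stanleyCell (u i) (Z i)) :
    ∃ ord : Equiv.Perm (Fin r), ∀ k : Fin r,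
      IsAttachable (partialUnion M (fun i => stanleyCell (u (ord i)) (Z (ord i))) k)
        (u (ord k)) (Z (ord k)) := by
  induction r generalizing M with
  | zero => exact ⟨1, fun k => k.elim0⟩
  | succ n ih =>
    obtain ⟨j, hj⟩ := hP.exists_isAttachable_fin_two
    obtain ⟨e, he⟩ := ih (u := fun i => u (j.succAbove i)) (Z := fun i => Z (j.succAbove i))
      (hM.union_stanleyCell hj) (hP.union_succAbove j)
    -- attach the cell `j` first, then the others in the order `e`
    let ord : Equiv.Perm (Fin (n + 1)) :=
      (finSuccEquiv n).trans ((Equiv.optionCongr e).trans (finSuccEquiv' j).symm)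
    have ord_zero : ord 0 = j := by simp [ord]
    have ord_succ : ∀ i, ord i.succ = j.succAbove (e i) := by simp [ord]
    refine ⟨ord, Fin.cases ?_ fun k => ?_⟩
    · simpa [ord_zero] using hj
    · simpa [Fin.val_succ, partialUnion_add_one_eq_partialUnion_union, ord_zero, ord_succ]
        using he k

section Algebra

variable {K : Type*} [Field K] {σ : Type*}

theorem mono_add (a b : σ →₀ ℕ) : mono K (a + b) = mono K a * mono K b := by
  simp [mono, monomial_mul]

theorem span_mono_eq_restrictSupportIdeal {T : Set (σ →₀ ℕ)} (hT : IsUpperSet T) :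
    Ideal.span (mono K '' T) = restrictSupportIdeal K T hT := by
  ext p
  change p ∈ Ideal.span ((fun s => monomial s (1 : K)) '' T) ↔ ↑p.support ⊆ T
  rw [mem_ideal_span_monomial_image]
  exact ⟨fun h m hm => let ⟨s, hs, hle⟩ := h m hm; hT hle hs, fun h m hm => ⟨m, h hm, le_rfl⟩⟩

theorem mem_span_mono_iff {T : Set (σ →₀ ℕ)} (hT : IsUpperSet T) {p : MvPolynomial σ K} :
    p ∈ Ideal.span (mono K '' T) ↔ ↑p.support ⊆ T := by
  rw [span_mono_eq_restrictSupportIdeal hT]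
  rfl

theorem restrictScalars_span_mono {T : Set (σ →₀ ℕ)} (hT : IsUpperSet T) :
    (Ideal.span (mono K '' T)).restrictScalars K = Submodule.span K (mono K '' T) := by
  rw [span_mono_eq_restrictSupportIdeal hT, restrictScalars_restrictSupportIdeal,
    restrictSupport_eq_span]
  rfl

theorem mul_mono_mem_span_mono_iff {T : Set (σ →₀ ℕ)} (hT : IsUpperSet T)
    (p : MvPolynomial σ K) (u : σ →₀ ℕ) :
    p * mono K u ∈ Ideal.span (mono K '' T) ↔ ∀ m ∈ p.support, u + m ∈ T := by
  rw [mem_span_mono_iff hT]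
  constructor
  · intro h m hm
    apply h
    rw [Finset.mem_coe, mem_support_iff, add_comm, mono, coeff_mul_monomial, mul_one]
    exact mem_support_iff.mp hm
  · intro h m hm
    rw [Finset.mem_coe, mem_support_iff, mono, coeff_mul_monomial'] at hm
    split_ifs at hm with hle
    · rw [← add_tsub_cancel_of_le hle]
      exact h _ (mem_support_iff.mpr (by simpa using hm))
    · exact absurd rfl hm

theorem ker_aeval_eq_span_X {R : Type*} [CommRing R] (s : Set σ) [DecidablePred (· ∈ s)] :
    RingHom.ker (aeval fun i => if i ∈ s then 0 else X i :
      MvPolynomial σ R →ₐ[R] MvPolynomial σ R) = Ideal.span (X '' s) := by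
  set φ : MvPolynomial σ R →ₐ[R] MvPolynomial σ R := aeval fun i => if i ∈ s then 0 else X i
  refine le_antisymm (fun p hp => ?_) (Ideal.span_le.mpr ?_)
  · have key : ∀ q, q - φ q ∈ Ideal.span (X '' s) := by
      intro q
      induction q using MvPolynomial.induction_on with
      | C a => simp
      | add p q hp hq => simpa [add_sub_add_comm] using add_mem hp hq
      | mul_X p i hp =>
        have hX : X i - φ (X i) ∈ Ideal.span (X '' s) := by
          by_cases hi : i ∈ s
          · simpa [φ, hi] using Ideal.subset_span (s := X '' s) ⟨i, hi, rfl⟩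
          · simp [φ, hi]
        have : p * X i - φ (p * X i) = (p - φ p) * X i + φ p * (X i - φ (X i)) := by
          rw [map_mul]
          ring
        rw [this]
        exact add_mem (Ideal.mul_mem_right _ _ hp) (Ideal.mul_mem_left _ _ hX)
    simpa [RingHom.mem_ker.mp hp] using key p
  · rintro _ ⟨i, hi, rfl⟩
    simp [φ, hi]

theorem isPrime_span_X_image {R : Type*} [CommRing R] [IsDomain R] (s : Set σ) :
    (Ideal.span (X '' s : Set (MvPolynomial σ R))).IsPrime := by
  classical
  rw [← ker_aeval_eq_span_X]
  exact RingHom.ker_isPrime _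

theorem colon_span_mono_eq {T : Set (σ →₀ ℕ)} (hT : IsUpperSet T) {u : σ →₀ ℕ} {Z : Finset σ}
    (h : IsAttachable T u Z) (hdisj : Disjoint (stanleyCell u Z) T) :
    (Ideal.span (mono K '' T)).colon (Ideal.span {mono K u}) = Ideal.span (X '' (↑Z)ᶜ) := by
  ext p
  rw [Ideal.mem_colon_span_singleton, mul_mono_mem_span_mono_iff hT, mem_ideal_span_X_image]
  simp only [h.add_mem_iff hT hdisj, Set.mem_compl_iff, Finset.mem_coe]

theorem span_mono_stanleyCell (u : σ →₀ ℕ) (Z : Finset σ) :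
    Ideal.span (mono K '' stanleyCell u Z) = Ideal.span {mono K u} := by
  refine le_antisymm (Ideal.span_le.mpr ?_) (Ideal.span_le.mpr ?_)
  · rintro _ ⟨_, ⟨v, -, rfl⟩, rfl⟩
    rw [mono_add]
    exact Ideal.mul_mem_right _ _ (Ideal.subset_span rfl)
  · rw [Set.singleton_subset_iff]
    exact Ideal.subset_span ⟨u, self_mem_stanleyCell u Z, rfl⟩

theorem IsMonomialIdeal.exists_isUpperSet_eq_span {I : Ideal (MvPolynomial σ K)}
    (hI : IsMonomialIdeal I) : ∃ M, IsUpperSet M ∧ I = Ideal.span (mono K '' M) := by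
  obtain ⟨A, rfl⟩ := hI
  refine ⟨upperClosure A, (upperClosure A).upper, Ideal.ext fun p => ?_⟩
  rw [mem_span_mono_iff (upperClosure A).upper]
  change p ∈ Ideal.span ((fun s => monomial s (1 : K)) '' A) ↔ _
  rw [mem_ideal_span_monomial_image]
  simp [Set.subset_def, mem_upperClosure]

theorem isPrimeFiltration_partialUnion {M : Set (σ →₀ ℕ)} (hM : IsUpperSet M) {r : ℕ}
    {u : Fin r → σ →₀ ℕ} {Z : Fin r → Finset σ}
    (hP : IsComplPartition M fun i => stanleyCell (u i) (Z i))
    (hA : ∀ k : Fin r,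
      IsAttachable (partialUnion M (fun i => stanleyCell (u i) (Z i)) k) (u k) (Z k)) :
    IsPrimeFiltration (Ideal.span (mono K '' M))
      (fun t => Ideal.span (mono K '' partialUnion M (fun i => stanleyCell (u i) (Z i)) t)) u := by
  refine ⟨by simp, ?_, fun j => ?_, fun j => ?_⟩
  · dsimp only
    rw [Fin.val_last, hP.partialUnion_eq_univ, Set.image_univ, Ideal.eq_top_iff_one]
    exact Ideal.subset_span ⟨0, by simp [mono]⟩
  · dsimp only
    rw [Fin.val_succ, Fin.val_castSucc, partialUnion_succ j.isLt, Set.image_union,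
      Ideal.span_union, span_mono_stanleyCell]
  · dsimp only
    rw [Fin.val_castSucc, colon_span_mono_eq (isUpperSet_partialUnion hM hA j j.isLt.le) (hA j)
      (hP.disjoint_partialUnion j)]
    exact isPrime_span_X_image _

end Algebra

section Stanley

variable {K : Type*} [Field K] {n : ℕ}

theorem stanleySubspace_eq_span (a : Fin n →₀ ℕ) (Z : Finset (Fin n)) :
    stanleySubspace K a Z = Submodule.span K (mono K '' stanleyCell a Z) := by
  rw [stanleySubspace, stanleyCell, Set.image_image]

theorem IsStanleyDecomposition.isComplPartition {M : Set (Fin n →₀ ℕ)} (hM : IsUpperSet M)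
    {r : ℕ} {u : Fin r → Fin n →₀ ℕ} {Z : Fin r → Finset (Fin n)}
    (hD : IsStanleyDecomposition (Ideal.span (mono K '' M)) u Z) :
    IsComplPartition M fun i => stanleyCell (u i) (Z i) := by
  refine ⟨fun i j hij => Set.disjoint_left.mpr ?_, Set.Subset.antisymm ?_ fun a ha => ?_⟩
  · rintro _ ⟨v, hv, rfl⟩ ⟨w, hw, he⟩
    refine hij (congrArg Sigma.fst (hD.1.injective (a₁ := ⟨i, v, hv⟩) (a₂ := ⟨j, w, hw⟩) ?_))
    simp only [stanleyFamily, he]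
  · refine Set.iUnion_subset fun i => ?_
    rintro _ ⟨v, hv, rfl⟩ hvM
    refine hD.1.ne_zero ⟨i, v, hv⟩ (Ideal.Quotient.eq_zero_iff_mem.mpr ?_)
    exact Ideal.subset_span (Set.mem_image_of_mem _ hvM)
  by_contra hcov
  -- the coefficient of `x^a` vanishes on the ideal and on every Stanley space, but not on `x^a`
  have hle : Set.range (stanleyFamily (Ideal.span (mono K '' M)) u Z) ⊆
      ((LinearMap.ker (lcoeff K a)).map
        (Ideal.Quotient.mkₐ K (Ideal.span (mono K '' M))).toLinearMap : Set _) := by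
    rintro _ ⟨⟨i, v, hv⟩, rfl⟩
    refine ⟨mono K (u i + v), ?_, rfl⟩
    have hva : u i + v ≠ a := fun h => hcov (Set.mem_iUnion.mpr ⟨i, h ▸ ⟨v, hv, rfl⟩⟩)
    simp [mono, coeff_monomial, hva]
  have htop : Ideal.Quotient.mk _ (mono K a) ∈
      Submodule.span K (Set.range (stanleyFamily (Ideal.span (mono K '' M)) u Z)) := by
    rw [hD.2]
    trivial
  obtain ⟨p, hp, hpa⟩ := Submodule.span_le.mpr hle htop
  have hmem : p - mono K a ∈ Ideal.span (mono K '' M) :=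
    Ideal.Quotient.eq.mp (by simpa [Ideal.Quotient.mkₐ_eq_mk] using hpa)
  refine ha ((mem_span_mono_iff hM).mp hmem ?_)
  rw [Finset.mem_coe, mem_support_iff, coeff_sub, show coeff a p = 0 from hp]
  simp [mono]

theorem stanleyPartialSum_span_mono {M : Set (Fin n →₀ ℕ)} (hM : IsUpperSet M) {r : ℕ}
    (u : Fin r → Fin n →₀ ℕ) (Z : Fin r → Finset (Fin n)) (ord : Equiv.Perm (Fin r))
    (k : Fin r) :
    stanleyPartialSum (Ideal.span (mono K '' M)) u Z ord k =
      Submodule.span K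
        (mono K '' partialUnion M (fun i => stanleyCell (u (ord i)) (Z (ord i))) (k + 1)) := by
  rw [stanleyPartialSum, restrictScalars_span_mono hM, partialUnion_val_add_one, Set.image_union,
    Submodule.span_union, Set.image_iUnion₂, Submodule.span_iUnion₂]
  simp_rw [stanleySubspace_eq_span]

end Stanley

/-- In `S = K[x,y]` every Stanley decomposition of `S/I`
corresponds to a prime filtration: the Stanley spaces can be ordered so that
every partial sum `I ⊕ T_1 ⊕ ⋯ ⊕ T_k` is a monomial ideal and the resulting
chain is a prime filtration of `S/I`. -/
theorem every_stanley_decomposition_corresponds_two_variables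
    {K : Type*} [Field K] (I : Ideal (MvPolynomial (Fin 2) K))
    (hI : IsMonomialIdeal I) {r : ℕ}
    (u : Fin r → (Fin 2 →₀ ℕ)) (Z : Fin r → Finset (Fin 2))
    (hD : IsStanleyDecomposition I u Z) :
    ∃ ord : Equiv.Perm (Fin r),
      (∀ k : Fin r, ∃ J : Ideal (MvPolynomial (Fin 2) K), IsMonomialIdeal J ∧
        stanleyPartialSum I u Z ord k = Submodule.restrictScalars K J) ∧
      ∃ c : Fin (r + 1) → Ideal (MvPolynomial (Fin 2) K),
        IsPrimeFiltration I c (fun k => u (ord k)) ∧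
        ∀ k : Fin r, Submodule.restrictScalars K (c k.succ) =
          stanleyPartialSum I u Z ord k := by
  obtain ⟨M, hM, rfl⟩ := hI.exists_isUpperSet_eq_span
  have hP := hD.isComplPartition hM
  obtain ⟨ord, hord⟩ := exists_attaching_order hM hP
  have hup := isUpperSet_partialUnion hM hord
  set C : Fin r → Set (Fin 2 →₀ ℕ) := fun i => stanleyCell (u (ord i)) (Z (ord i))
  refine ⟨ord, fun k => ⟨Ideal.span (mono K '' partialUnion M C (k + 1)), ⟨_, rfl⟩, ?_⟩, _,
    isPrimeFiltration_partialUnion hM (hP.comp_equiv ord) hord, fun k => ?_⟩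
  · rw [stanleyPartialSum_span_mono hM, restrictScalars_span_mono (hup _ k.isLt)]
  · rw [stanleyPartialSum_span_mono hM, Fin.val_succ, restrictScalars_span_mono (hup _ k.isLt)]
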